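/- arXiv:2003.09703 — 4 statements merged into one kernel-verified Lean document; each statement's English description precedes it below -/
import Mathlib

section
/- Let ν be a non-degenerate probability measure on ℝ with support contained in (−∞, b]. Then the K-transform K_ν is strictly decreasing on the real interval (b, +∞): for all real z₁, z₂ with b < z₁ < z₂ one has K_ν(z₂) < K_ν(z₁). -/
open MeasureTheory Filter Topology Set

/-- The Cauchy transform `G_ν(z) = ∫ 1/(z-x) dν(x)` of a measure on `ℝ`, for real `z`. -/
noncomputable def cauchyT (ν : Measure ℝ) (z : ℝ) : ℝ := ∫ x, (z - x)⁻¹ ∂ν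

/-- The K-transform (self-energy) `K_ν(z) = z - 1/G_ν(z)`. -/
noncomputable def kT (ν : Measure ℝ) (z : ℝ) : ℝ := z - (cauchyT ν z)⁻¹

/-!
For `x < z₁ < z₂` we have `(z₂ - x)⁻¹ = ψ ((z₁ - x)⁻¹)` with `ψ t = t / (1 + (z₂ - z₁) t)`,
which is strictly concave on `[0, ∞)`. Since `x ↦ (z₁ - x)⁻¹` is injective and `ν` is not a
point mass, strict Jensen gives `G(z₂) < ψ (G(z₁))`, i.e. `1 / G(z₁) + (z₂ - z₁) < 1 / G(z₂)`,
which is `K(z₂) < K(z₁)`.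
-/

theorem MeasureTheory.Measure.eq_dirac_of_ae_eq {α : Type*} [MeasurableSpace α]
    [MeasurableSingletonClass α] {μ : Measure α} [IsProbabilityMeasure μ] {a : α}
    (h : ∀ᵐ x ∂μ, x = a) : μ = dirac a := by
  have hμ : μ = μ {a} • dirac a := by
    simpa using (Measure.ae_mem_finset_iff (s := {a})).1 (by simpa using h)
  have ha : μ {a} = 1 := (prob_compl_eq_zero_iff (measurableSet_singleton a)).1 (ae_iff.1 h)
  rw [hμ, ha, one_smul]

theorem strictConcaveOn_div_one_add_mul {d : ℝ} (hd : 0 < d) :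
    StrictConcaveOn ℝ (Ici 0) fun t => t / (1 + d * t) := by
  refine ⟨convex_Ici 0, fun x (hx : 0 ≤ x) y (hy : 0 ≤ y) hxy a b ha hb hab => ?_⟩
  simp only [smul_eq_mul]
  rw [mul_div_assoc', mul_div_assoc', div_add_div _ _ (by positivity) (by positivity),
    div_lt_div_iff₀ (by positivity) (by positivity)]
  obtain rfl : b = 1 - a := by linarith
  nlinarith [mul_pos (mul_pos (mul_pos ha hb) hd) (sq_pos_of_ne_zero (sub_ne_zero.2 hxy))]

section

variable {ν : Measure ℝ} {b z : ℝ}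

theorem integrable_inv_sub [IsFiniteMeasure ν] (hν : ∀ᵐ x ∂ν, x ≤ b) (hz : b < z) :
    Integrable (fun x => (z - x)⁻¹) ν :=
  .of_bound (by fun_prop) (z - b)⁻¹ <| hν.mono fun x hx => by
    rw [Real.norm_eq_abs, abs_of_pos (inv_pos.2 (by linarith))]
    exact inv_anti₀ (by linarith) (by linarith)

theorem cauchyT_pos [IsProbabilityMeasure ν] (hν : ∀ᵐ x ∂ν, x ≤ b) (hz : b < z) :
    0 < cauchyT ν z := by
  have hpos : ∀ᵐ x ∂ν, 0 < (z - x)⁻¹ := hν.mono fun x hx => inv_pos.2 (by linarith)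
  rw [cauchyT, integral_pos_iff_support_of_nonneg_ae (hpos.mono fun x hx => hx.le)
    (integrable_inv_sub hν hz)]
  refine pos_iff_ne_zero.2 fun h => ?_
  obtain ⟨x, hx, hx'⟩ := (hpos.and (measure_eq_zero_iff_ae_notMem.1 h)).exists
  exact hx' hx.ne'

theorem cauchyT_lt_div_one_add_mul [IsProbabilityMeasure ν]
    (hnd : ∀ a : ℝ, ν ≠ Measure.dirac a) (hν : ∀ᵐ x ∂ν, x ≤ b) {z₁ z₂ : ℝ}
    (hz₁ : b < z₁) (hz : z₁ < z₂) :
    cauchyT ν z₂ < cauchyT ν z₁ / (1 + (z₂ - z₁) * cauchyT ν z₁) := by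
  set ψ : ℝ → ℝ := fun t => t / (1 + (z₂ - z₁) * t)
  have hd : 0 < z₂ - z₁ := sub_pos.2 hz
  have hψ : ∀ᵐ x ∂ν, ψ (z₁ - x)⁻¹ = (z₂ - x)⁻¹ := hν.mono fun x hx => by
    have h₁ : 0 < z₁ - x := by linarith
    have h₂ : z₂ - x ≠ 0 := by linarith
    simp only [ψ]
    rw [div_eq_iff (add_pos one_pos (mul_pos hd (inv_pos.2 h₁))).ne']
    field_simp
    ring
  have hψc : ContinuousOn ψ (Ici 0) :=
    continuousOn_id.div (by fun_prop) fun t (ht : 0 ≤ t) => by positivity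
  have hmem : ∀ᵐ x ∂ν, (z₁ - x)⁻¹ ∈ Ici 0 :=
    hν.mono fun x hx => mem_Ici.2 (inv_nonneg.2 (by linarith))
  have hint := (integrable_inv_sub hν (hz₁.trans hz)).congr (hψ.mono fun x hx => hx.symm)
  obtain hconst | hlt := (strictConcaveOn_div_one_add_mul hd).ae_eq_const_or_lt_map_average
    hψc isClosed_Ici hmem (integrable_inv_sub hν hz₁) hint
  · refine absurd (Measure.eq_dirac_of_ae_eq (hconst.mono fun x hx => ?_))
      (hnd (z₁ - (⨍ x, (z₁ - x)⁻¹ ∂ν)⁻¹))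
    rw [← show (z₁ - x)⁻¹ = ⨍ x, (z₁ - x)⁻¹ ∂ν from hx, inv_inv]
    ring
  · rwa [average_eq_integral, average_eq_integral, integral_congr_ae hψ] at hlt

theorem inv_cauchyT_add_sub_lt [IsProbabilityMeasure ν] (hnd : ∀ a : ℝ, ν ≠ Measure.dirac a)
    (hν : ∀ᵐ x ∂ν, x ≤ b) {z₁ z₂ : ℝ} (hz₁ : b < z₁) (hz : z₁ < z₂) :
    (cauchyT ν z₁)⁻¹ + (z₂ - z₁) < (cauchyT ν z₂)⁻¹ := by
  have hG₁ := cauchyT_pos hν hz₁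
  have hd : 0 < z₂ - z₁ := sub_pos.2 hz
  have hinv : cauchyT ν z₁ / (1 + (z₂ - z₁) * cauchyT ν z₁) =
      ((cauchyT ν z₁)⁻¹ + (z₂ - z₁))⁻¹ := by
    field_simp
  rw [lt_inv_comm₀ (by positivity) (cauchyT_pos hν (hz₁.trans hz)), ← hinv]
  exact cauchyT_lt_div_one_add_mul hnd hν hz₁ hz

end

/-- for a non-degenerate probability measure `ν` with support contained in
`(-∞, b]`, the K-transform is strictly decreasing on `(b, +∞)`. -/
theorem kTransform_strictAnti
    (ν : Measure ℝ) [IsProbabilityMeasure ν]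
    (hnd : ∀ a : ℝ, ν ≠ Measure.dirac a)
    (b : ℝ) (hb : ν (Set.Ioi b) = 0) :
    ∀ z₁ z₂ : ℝ, b < z₁ → z₁ < z₂ → kT ν z₂ < kT ν z₁ := by
  intro z₁ z₂ hz₁ hz
  have hν : ∀ᵐ x ∂ν, x ≤ b := (measure_eq_zero_iff_ae_notMem.1 hb).mono fun x hx => not_lt.1 hx
  have := inv_cauchyT_add_sub_lt hnd hν hz₁ hz
  unfold kT
  linarith
end

section
/- A probability measure on ℝ with support bounded from above is uniquely determined by its Cauchy transform on a real half-line: if ν₁ and ν₂ are probability measures with supports contained in (−∞, b] and G_{ν₁}(x) = G_{ν₂}(x) for all real x > b, then ν₁ = ν₂. Consequently such a measure is also uniquely determined by its K-transform K_ν(x) = x − 1/G_ν(x) on (b, +∞). -/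
set_option maxRecDepth 4000


open MeasureTheory Filter Topology Set

/-- The function `w ↦ ∫ y/(1+wy) dμ` has the power series `∑ (-1)^n (∫ y^(n+1) dμ) w^n`
on the unit ball, for `μ` a probability measure concentrated on `[0,1]`. -/
lemma hasFPS_aux (μ : Measure ℝ) [IsProbabilityMeasure μ]
    (hae : ∀ᵐ y ∂μ, y ∈ Set.Icc (0:ℝ) 1) :
    HasFPowerSeriesOnBall (fun w => ∫ y, y * (1 + w * y)⁻¹ ∂μ)
      (FormalMultilinearSeries.ofScalars ℝ fun n => (-1)^n * ∫ y, y^(n+1) ∂μ) 0 1 := by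
  constructor
  · -- radius bound
    apply FormalMultilinearSeries.le_radius_of_bound _ 1
    intro n
    rw [FormalMultilinearSeries.ofScalars_norm]
    simp only [NNReal.coe_one, one_pow, mul_one]
    have : ‖(-1:ℝ)^n * ∫ y, y^(n+1) ∂μ‖ = ‖∫ y, y^(n+1) ∂μ‖ := by
      simp [norm_mul]
    rw [this]
    calc ‖∫ y, y^(n+1) ∂μ‖ ≤ 1 * (μ Set.univ).toReal := by
          refine norm_integral_le_of_norm_le_const ?_
          filter_upwards [hae] with y hy
          rw [Real.norm_eq_abs, abs_pow]
          exact pow_le_one₀ (abs_nonneg y) (abs_le.mpr ⟨by linarith [hy.1], hy.2⟩)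
      _ = 1 := by simp
  · exact one_pos
  · intro w hw
    have hw' : |w| < 1 := by
      rw [EMetric.mem_ball, edist_dist, Real.dist_eq, sub_zero] at hw
      exact_mod_cast ENNReal.ofReal_lt_one.mp hw
    set F : ℕ → ℝ → ℝ := fun n y => (-w)^n * y^(n+1) with hF
    have hmeas : ∀ n, AEStronglyMeasurable (F n) μ := fun n =>
      (measurable_const.mul (measurable_id.pow_const _)).aestronglyMeasurable
    have hbound : ∀ n, ∀ᵐ y ∂μ, ‖F n y‖ ≤ |w|^n := by
      intro n
      filter_upwards [hae] with y hy
      have hy1 : |y| ≤ 1 := abs_le.mpr ⟨by linarith [hy.1], hy.2⟩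
      have : ‖F n y‖ = |w|^n * |y|^(n+1) := by
        rw [hF]; simp [Real.norm_eq_abs, abs_mul, abs_pow]
      rw [this]
      calc |w|^n * |y|^(n+1) ≤ |w|^n * 1 :=
            mul_le_mul_of_nonneg_left (pow_le_one₀ (abs_nonneg y) hy1)
              (pow_nonneg (abs_nonneg w) n)
        _ = |w|^n := mul_one _
    have hint : ∀ n, Integrable (F n) μ := fun n =>
      Integrable.mono' (integrable_const _) (hmeas n) (hbound n)
    have hsum : Summable fun n => ∫ y, ‖F n y‖ ∂μ := by
      refine Summable.of_nonneg_of_le (fun n => integral_nonneg fun y => norm_nonneg _)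
        (fun n => ?_) (summable_geometric_of_lt_one (abs_nonneg w) hw')
      calc ∫ y, ‖F n y‖ ∂μ ≤ ∫ _, |w|^n ∂μ :=
            integral_mono_ae (hint n).norm (integrable_const _) (hbound n)
        _ = |w|^n := by simp
    have key := hasSum_integral_of_summable_integral_norm hint hsum
    have h1 : (∫ y, (∑' n, F n y) ∂μ) = ∫ y, y * (1 + w * y)⁻¹ ∂μ := by
      refine integral_congr_ae ?_
      filter_upwards [hae] with y hy
      have hy1 : |y| ≤ 1 := abs_le.mpr ⟨by linarith [hy.1], hy.2⟩
      have hwy : |(-(w*y))| < 1 := by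
        rw [abs_neg, abs_mul]
        calc |w| * |y| ≤ |w| * 1 := mul_le_mul_of_nonneg_left hy1 (abs_nonneg w)
          _ = |w| := mul_one _
          _ < 1 := hw'
      have hterm : ∀ n, F n y = y * (-(w*y))^n := by
        intro n; rw [hF]; ring
      calc ∑' n, F n y = ∑' n, y * (-(w*y))^n := tsum_congr hterm
        _ = y * (1 - (-(w*y)))⁻¹ := by rw [tsum_mul_left, tsum_geometric_of_abs_lt_one hwy]
        _ = y * (1 + w*y)⁻¹ := by ring_nf
    rw [h1] at key
    have h2 : ∀ n, ((FormalMultilinearSeries.ofScalars ℝ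
        fun n => (-1:ℝ)^n * ∫ y, y^(n+1) ∂μ) n fun _ => w) = ∫ y, F n y ∂μ := by
      intro n
      rw [FormalMultilinearSeries.ofScalars_apply_eq]
      simp only [smul_eq_mul, hF]
      rw [MeasureTheory.integral_const_mul, neg_pow]
      ring
    rw [show (fun n => (FormalMultilinearSeries.ofScalars ℝ
        fun n => (-1:ℝ)^n * ∫ y, y^(n+1) ∂μ) n fun _ => w) = fun n => ∫ y, F n y ∂μ
      from funext h2, zero_add]
    exact key

/-- Two probability measures concentrated on `[0,1]` with equal moments are equal. -/
lemma eq_of_moments (μ₁ μ₂ : Measure ℝ) [IsProbabilityMeasure μ₁] [IsProbabilityMeasure μ₂]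
    (hae₁ : ∀ᵐ y ∂μ₁, y ∈ Set.Icc (0:ℝ) 1) (hae₂ : ∀ᵐ y ∂μ₂, y ∈ Set.Icc (0:ℝ) 1)
    (hm : ∀ n : ℕ, ∫ y, y^n ∂μ₁ = ∫ y, y^n ∂μ₂) : μ₁ = μ₂ := by
  have hI : ∀ (μ : Measure ℝ) [IsProbabilityMeasure μ], (∀ᵐ y ∂μ, y ∈ Set.Icc (0:ℝ) 1) →
      ∀ g : ℝ → ℝ, Continuous g → Integrable g μ := by
    intro μ _ hae g hg
    obtain ⟨C, hC⟩ := (isCompact_Icc (a:=(0:ℝ)) (b:=1)).exists_bound_of_continuousOn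
      hg.continuousOn
    refine Integrable.mono' (integrable_const C) hg.aestronglyMeasurable ?_
    filter_upwards [hae] with y hy
    exact hC y hy
  have hpoly : ∀ p : Polynomial ℝ, ∫ y, p.eval y ∂μ₁ = ∫ y, p.eval y ∂μ₂ := by
    intro p
    have hrw : ∀ (μ : Measure ℝ), ∫ y, p.eval y ∂μ =
        ∫ y, ∑ i ∈ Finset.range (p.natDegree + 1), p.coeff i * y ^ i ∂μ := by
      intro μ; congr 1; funext y
      rw [Polynomial.eval_eq_sum_range]
    rw [hrw μ₁, hrw μ₂, integral_finset_sum, integral_finset_sum]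
    · exact Finset.sum_congr rfl fun i _ => by
        rw [MeasureTheory.integral_const_mul, MeasureTheory.integral_const_mul, hm i]
    · exact fun i _ => (hI μ₂ hae₂ _ (continuous_pow i)).const_mul _
    · exact fun i _ => (hI μ₁ hae₁ _ (continuous_pow i)).const_mul _
  have hcont : ∀ g : ℝ → ℝ, Continuous g → ∫ y, g y ∂μ₁ = ∫ y, g y ∂μ₂ := by
    intro g hg
    have key : ∀ ε : ℝ, 0 < ε → |∫ y, g y ∂μ₁ - ∫ y, g y ∂μ₂| ≤ ε := by
      intro ε hε
      obtain ⟨p, hp⟩ := exists_polynomial_near_of_continuousOn 0 1 g hg.continuousOn (ε/3)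
        (by linarith)
      have est : ∀ (μ : Measure ℝ) [IsProbabilityMeasure μ], (∀ᵐ y ∂μ, y ∈ Set.Icc (0:ℝ) 1) →
          |∫ y, g y ∂μ - ∫ y, p.eval y ∂μ| ≤ ε/3 := by
        intro μ _ hae
        rw [← integral_sub (hI μ hae g hg) (hI μ hae _ p.continuous)]
        calc |∫ y, (g y - p.eval y) ∂μ| ≤ (ε/3) * (μ Set.univ).toReal := by
              refine norm_integral_le_of_norm_le_const (μ := μ) (f := fun y => g y - p.eval y) ?_
              filter_upwards [hae] with y hy
              rw [Real.norm_eq_abs, abs_sub_comm]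
              exact (hp y hy).le
          _ = ε/3 := by simp
      have e1 := est μ₁ hae₁
      have e2 := est μ₂ hae₂
      have hd : ∫ y, g y ∂μ₁ - ∫ y, g y ∂μ₂ =
          (∫ y, g y ∂μ₁ - ∫ y, p.eval y ∂μ₁) - (∫ y, g y ∂μ₂ - ∫ y, p.eval y ∂μ₂) := by
        rw [hpoly p]; ring
      rw [hd]
      calc |(∫ y, g y ∂μ₁ - ∫ y, p.eval y ∂μ₁) - (∫ y, g y ∂μ₂ - ∫ y, p.eval y ∂μ₂)|
          ≤ |∫ y, g y ∂μ₁ - ∫ y, p.eval y ∂μ₁| + |∫ y, g y ∂μ₂ - ∫ y, p.eval y ∂μ₂| :=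
            abs_sub _ _
        _ ≤ ε := by linarith
    by_contra hne
    have h0 : 0 < |∫ y, g y ∂μ₁ - ∫ y, g y ∂μ₂| := abs_pos.mpr (sub_ne_zero.mpr hne)
    have := key _ (half_pos h0)
    linarith
  refine ext_of_forall_lintegral_eq_of_IsFiniteMeasure ?_
  intro f
  have h1 : (∫⁻ x, f x ∂μ₁) ≠ ⊤ := (f.lintegral_lt_top_of_nnreal μ₁).ne
  have h2 : (∫⁻ x, f x ∂μ₂) ≠ ⊤ := (f.lintegral_lt_top_of_nnreal μ₂).ne
  refine (ENNReal.toReal_eq_toReal_iff' h1 h2).mp ?_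
  rw [BoundedContinuousFunction.toReal_lintegral_coe_eq_integral,
    BoundedContinuousFunction.toReal_lintegral_coe_eq_integral]
  exact hcont (fun x => (f x : ℝ)) (NNReal.continuous_coe.comp f.continuous)

lemma cauchy_determines (b : ℝ) (ν₁ ν₂ : Measure ℝ)
    (hp₁ : IsProbabilityMeasure ν₁) (hp₂ : IsProbabilityMeasure ν₂)
    (hb₁ : ν₁ (Set.Ioi b) = 0) (hb₂ : ν₂ (Set.Ioi b) = 0)
    (hG : ∀ x : ℝ, b < x → cauchyT ν₁ x = cauchyT ν₂ x) : ν₁ = ν₂ := by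
  set c : ℝ := b + 1 with hcdef
  set f : ℝ → ℝ := fun t => (c - t)⁻¹ with hfdef
  have hf : Measurable f := (measurable_const.sub measurable_id).inv
  have finj : Function.Injective f := by
    intro s t hst
    have h := inv_injective hst
    have : c - s = c - t := h
    linarith
  set μ₁ := ν₁.map f with hμ₁
  set μ₂ := ν₂.map f with hμ₂
  haveI : IsProbabilityMeasure μ₁ := Measure.isProbabilityMeasure_map hf.aemeasurable
  haveI : IsProbabilityMeasure μ₂ := Measure.isProbabilityMeasure_map hf.aemeasurable
  have haeb : ∀ (ν : Measure ℝ), ν (Set.Ioi b) = 0 → ∀ᵐ t ∂ν, t ≤ b := by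
    intro ν hν
    rw [ae_iff]
    convert hν using 2
    ext t
    simp [not_le]
  have hae : ∀ (ν : Measure ℝ), ν (Set.Ioi b) = 0 →
      ∀ᵐ y ∂(ν.map f), y ∈ Set.Icc (0:ℝ) 1 := by
    intro ν hν
    refine (ae_map_iff hf.aemeasurable measurableSet_Icc).mpr ?_
    filter_upwards [haeb ν hν] with t ht
    have h1 : (1:ℝ) ≤ c - t := by rw [hcdef]; linarith
    have h0 : (0:ℝ) < c - t := by linarith
    constructor
    · exact le_of_lt (inv_pos.mpr h0)
    · rw [hfdef]
      exact inv_le_one_of_one_le₀ h1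
  have hH : ∀ (ν : Measure ℝ), ν (Set.Ioi b) = 0 → ∀ w : ℝ, |w| < 1 →
      (∫ y, y * (1 + w * y)⁻¹ ∂(ν.map f)) = cauchyT ν (c + w) := by
    intro ν hν w hw
    have hgm : AEStronglyMeasurable (fun y : ℝ => y * (1 + w * y)⁻¹) (ν.map f) :=
      (measurable_id.mul
        ((measurable_const.add (measurable_id.const_mul w)).inv)).aestronglyMeasurable
    rw [integral_map hf.aemeasurable hgm]
    refine integral_congr_ae ?_
    filter_upwards [haeb ν hν] with t ht
    have h1 : (1:ℝ) ≤ c - t := by rw [hcdef]; linarith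
    have h0 : (0:ℝ) < c - t := by linarith
    have hx : (0:ℝ) < c + w - t := by
      have := abs_lt.mp hw
      linarith
    show f t * (1 + w * f t)⁻¹ = (c + w - t)⁻¹
    rw [hfdef]
    dsimp only
    rw [show (1 + w * (c - t)⁻¹) = (c + w - t) / (c - t) by field_simp; ring, inv_div]
    field_simp
  have h₁ := hasFPS_aux μ₁ (hae ν₁ hb₁)
  have h₂ := hasFPS_aux μ₂ (hae ν₂ hb₂)
  have heq : (fun w => ∫ y, y * (1 + w * y)⁻¹ ∂μ₂) =ᶠ[𝓝 (0:ℝ)]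
      (fun w => ∫ y, y * (1 + w * y)⁻¹ ∂μ₁) := by
    filter_upwards [Metric.ball_mem_nhds (0:ℝ) one_pos] with w hw
    rw [Metric.mem_ball, Real.dist_eq, sub_zero] at hw
    have hbx : b < c + w := by
      have := abs_lt.mp hw
      rw [hcdef]
      linarith
    rw [hμ₂, hμ₁, hH ν₂ hb₂ w hw, hH ν₁ hb₁ w hw, ← hG (c + w) hbx]
  have hps := (h₁.hasFPowerSeriesAt).eq_formalMultilinearSeries
    ((h₂.hasFPowerSeriesAt).congr heq)
  have hcoef := FormalMultilinearSeries.ofScalars_series_injective ℝ ℝ hps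
  have hm : ∀ n : ℕ, ∫ y, y^n ∂μ₁ = ∫ y, y^n ∂μ₂ := by
    intro n
    cases n with
    | zero => simp
    | succ n =>
      have h := congrFun hcoef n
      have hne : ((-1:ℝ)^n) ≠ 0 := pow_ne_zero _ (by norm_num)
      exact mul_left_cancel₀ hne h
  have hμ : μ₁ = μ₂ := eq_of_moments μ₁ μ₂ (hae ν₁ hb₁) (hae ν₂ hb₂) hm
  have emb : MeasurableEmbedding f := hf.measurableEmbedding finj
  ext s hs
  have him : MeasurableSet (f '' s) := (emb.measurableSet_image).mpr hs
  have e1 : μ₁ (f '' s) = ν₁ s := by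
    rw [hμ₁, Measure.map_apply hf him, Function.Injective.preimage_image finj]
  have e2 : μ₂ (f '' s) = ν₂ s := by
    rw [hμ₂, Measure.map_apply hf him, Function.Injective.preimage_image finj]
  rw [← e1, ← e2, hμ]

/-- a probability measure with support contained in `(-∞, b]` is uniquely
determined by its Cauchy transform on the real half-line `(b, +∞)`; consequently it is
also uniquely determined by its K-transform on `(b, +∞)`. -/
theorem measure_determined_by_cauchy_and_kTransform (b : ℝ) :
    (∀ ν₁ ν₂ : Measure ℝ, IsProbabilityMeasure ν₁ → IsProbabilityMeasure ν₂ →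
      ν₁ (Set.Ioi b) = 0 → ν₂ (Set.Ioi b) = 0 →
      (∀ x : ℝ, b < x → cauchyT ν₁ x = cauchyT ν₂ x) → ν₁ = ν₂) ∧
    (∀ ν₁ ν₂ : Measure ℝ, IsProbabilityMeasure ν₁ → IsProbabilityMeasure ν₂ →
      ν₁ (Set.Ioi b) = 0 → ν₂ (Set.Ioi b) = 0 →
      (∀ x : ℝ, b < x → kT ν₁ x = kT ν₂ x) → ν₁ = ν₂) := by
  refine ⟨cauchy_determines b, ?_⟩
  intro ν₁ ν₂ hp₁ hp₂ hb₁ hb₂ hK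
  refine cauchy_determines b ν₁ ν₂ hp₁ hp₂ hb₁ hb₂ (fun x hx => ?_)
  have h := hK x hx
  unfold kT at h
  have h2 : (cauchyT ν₁ x)⁻¹ = (cauchyT ν₂ x)⁻¹ := by linarith
  exact inv_injective h2
end

section
/- Let ν be a non-degenerate probability measure on ℝ with support bounded from above. Then lim_{z→+∞} K_ν(z) = m₀(ν) ≥ −∞, i.e. the limit of the K-transform as z → +∞ along the reals exists in [−∞, +∞) and equals the left endpoint m₀(ν) = lim_{θ→0⁺} k_ν(θ) of the domain of means (which is the mean ∫ x dν(x) when ν has a first moment). -/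
/-!
Since `z G_ν(z) = M_ν(1/z)`, the K-transform is `K_ν(z) = k_ν(1/z)`, so only `θ → 0⁺` matters.
There `k_ν(θ) = A(θ) / M_ν(θ)` with `A(θ) = ∫ x/(1-θx) dν`. With `supp ν ⊆ (-∞, c]`, dominated
convergence gives `M_ν(θ) → 1`; the integrand `x/(1-θx)` is bounded above by `2c` and decreases
to `x` as `θ ↓ 0`, so monotone convergence applied to `2c - x/(1-θx) ≥ 0` gives
`A(θ) → 2c - ∫⁻ (2c - x) dν`, the mean of `ν` in `[-∞, ∞)`.
-/

open MeasureTheory Filter Topology Set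

/-- `M_ν(θ) = ∫ 1/(1-θx) dν(x)`. -/
noncomputable def Mgen (ν : Measure ℝ) (θ : ℝ) : ℝ := ∫ x, (1 - θ * x)⁻¹ ∂ν

/-- The mean of `P_{(θ,ν)}`: `k_ν(θ) = (M_ν(θ) - 1)/(θ M_ν(θ))`. -/
noncomputable def kMean (ν : Measure ℝ) (θ : ℝ) : ℝ := (Mgen ν θ - 1) / (θ * Mgen ν θ)

open scoped ENNReal

lemma tendsto_lintegral_nhdsGT_of_antitoneOn {α : Type*} [MeasurableSpace α] {μ : Measure α}
    {F : ℝ → α → ℝ≥0∞} {G : α → ℝ≥0∞} {t a : ℝ} (hta : t < a)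
    (hF : ∀ s ∈ Ioo t a, AEMeasurable (F s) μ)
    (h_anti : ∀ᵐ x ∂μ, AntitoneOn (F · x) (Ioo t a))
    (h_lim : ∀ᵐ x ∂μ, Tendsto (F · x) (𝓝[>] t) (𝓝 (G x))) :
    Tendsto (fun s => ∫⁻ x, F s x ∂μ) (𝓝[>] t) (𝓝 (∫⁻ x, G x ∂μ)) := by
  obtain ⟨u, hu_anti, hu_mem, hu_lim⟩ := exists_seq_strictAnti_tendsto' hta
  have hu : Tendsto u atTop (𝓝[>] t) :=
    tendsto_nhdsWithin_iff.2 ⟨hu_lim, Eventually.of_forall fun n => (hu_mem n).1⟩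
  have h_seq : Tendsto (fun n => ∫⁻ x, F (u n) x ∂μ) atTop (𝓝 (∫⁻ x, G x ∂μ)) :=
    lintegral_tendsto_of_tendsto_of_monotone (fun n => hF _ (hu_mem n))
      (h_anti.mono fun x hx _ _ hnm => hx (hu_mem _) (hu_mem _) (hu_anti.antitone hnm))
      (h_lim.mono fun x hx => hx.comp hu)
  have h_int_anti : AntitoneOn (fun s => ∫⁻ x, F s x ∂μ) (Ioo t a) := fun s hs r hr hsr =>
    lintegral_mono_ae (h_anti.mono fun x hx => hx hs hr hsr)
  have h_int := h_int_anti.tendsto_nhdsWithin_Ioo_right (nonempty_Ioo.2 hta)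
    (OrderTop.bddAbove _)
  rwa [tendsto_nhds_unique (h_int.comp hu) h_seq] at h_int

lemma integral_eq_sub_lintegral_ofReal_sub {α : Type*} [MeasurableSpace α] {μ : Measure α}
    [IsProbabilityMeasure μ] {f : α → ℝ} {d : ℝ} (hf : Integrable f μ)
    (hfd : ∀ᵐ x ∂μ, f x ≤ d) :
    ((∫ x, f x ∂μ : ℝ) : EReal) = d - ∫⁻ x, ENNReal.ofReal (d - f x) ∂μ := by
  have h_nonneg : 0 ≤ᵐ[μ] fun x => d - f x := hfd.mono fun x hx => sub_nonneg.2 hx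
  have h_int : ∫ x, (d - f x) ∂μ = d - ∫ x, f x ∂μ := by
    simp [integral_sub (integrable_const d) hf]
  rw [← ofReal_integral_eq_lintegral_ofReal (f := (d - f ·)) ((integrable_const d).sub hf)
      h_nonneg,
    EReal.coe_ennreal_ofReal, max_eq_left (integral_nonneg_of_ae h_nonneg), h_int,
    ← EReal.coe_sub, sub_sub_cancel]

lemma EReal.continuous_coe_sub_coe_ennreal (d : ℝ) :
    Continuous fun y : ℝ≥0∞ => (d : EReal) - y := by
  simp_rw [sub_eq_add_neg]
  refine continuous_iff_continuousAt.2 fun y => ?_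
  exact (EReal.continuousAt_add (.inl (EReal.coe_ne_top d)) (.inl (EReal.coe_ne_bot d))).comp
    (continuous_const.prodMk (continuous_neg.comp continuous_coe_ennreal_ereal)).continuousAt

lemma tendsto_integral_nhdsGT_of_monotoneOn {α : Type*} [MeasurableSpace α] {μ : Measure α}
    [IsProbabilityMeasure μ] {f : ℝ → α → ℝ} {g : α → ℝ} {t a d : ℝ} (hta : t < a)
    (hf : ∀ s ∈ Ioo t a, Integrable (f s) μ) (hfd : ∀ s ∈ Ioo t a, ∀ᵐ x ∂μ, f s x ≤ d)
    (h_mono : ∀ᵐ x ∂μ, MonotoneOn (f · x) (Ioo t a))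
    (h_lim : ∀ᵐ x ∂μ, Tendsto (f · x) (𝓝[>] t) (𝓝 (g x))) :
    Tendsto (fun s => ((∫ x, f s x ∂μ : ℝ) : EReal)) (𝓝[>] t)
      (𝓝 (d - ∫⁻ x, ENNReal.ofReal (d - g x) ∂μ)) := by
  have h_lint : Tendsto (fun s => ∫⁻ x, ENNReal.ofReal (d - f s x) ∂μ) (𝓝[>] t)
      (𝓝 (∫⁻ x, ENNReal.ofReal (d - g x) ∂μ)) :=
    tendsto_lintegral_nhdsGT_of_antitoneOn hta
      (fun s hs => ((hf s hs).aemeasurable.const_sub d).ennreal_ofReal)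
      (h_mono.mono fun x hx s hs r hr hsr =>
        ENNReal.ofReal_le_ofReal (sub_le_sub_left (hx hs hr hsr) d))
      (h_lim.mono fun x hx => (ENNReal.continuous_ofReal.tendsto _).comp (hx.const_sub d))
  refine (((EReal.continuous_coe_sub_coe_ennreal d).tendsto _).comp h_lint).congr' ?_
  filter_upwards [Ioo_mem_nhdsGT hta] with s hs
  exact (integral_eq_sub_lintegral_ofReal_sub (hf s hs) (hfd s hs)).symm

lemma EReal.tendsto_coe_div {α : Type*} {l : Filter α} {f g : α → ℝ} {m : EReal}
    (hf : Tendsto (fun a => (f a : EReal)) l (𝓝 m)) (hg : Tendsto g l (𝓝 1)) :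
    Tendsto (fun a => ((f a / g a : ℝ) : EReal)) l (𝓝 m) := by
  have hg_inv : Tendsto (fun a => (((g a)⁻¹ : ℝ) : EReal)) l (𝓝 1) := by
    simpa only [inv_one, EReal.coe_one] using EReal.tendsto_coe.2 (hg.inv₀ one_ne_zero)
  convert (EReal.continuousAt_mul (.inr (EReal.coe_ne_bot 1)) (.inr (EReal.coe_ne_top 1))
    (.inr one_ne_zero) (.inr one_ne_zero)).tendsto.comp (hf.prodMk_nhds hg_inv) using 2
  · simp [div_eq_mul_inv, EReal.coe_mul]
  · simp

section

variable {c θ x : ℝ}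

lemma two_mul_mul_le_one_of_le_inv (hc : 0 < c) (hθ : θ ≤ (2 * c)⁻¹) : 2 * θ * c ≤ 1 :=
  calc 2 * θ * c = θ * (2 * c) := by ring
    _ ≤ (2 * c)⁻¹ * (2 * c) := by gcongr
    _ = 1 := inv_mul_cancel₀ (by positivity)

lemma half_le_one_sub_mul (hθ : 0 ≤ θ) (hθc : 2 * θ * c ≤ 1) (hx : x ≤ c) :
    1 / 2 ≤ 1 - θ * x := by
  rcases le_or_gt x 0 with h | h <;> nlinarith

lemma inv_one_sub_mul_le_two (hθ : 0 ≤ θ) (hθc : 2 * θ * c ≤ 1) (hx : x ≤ c) :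
    (1 - θ * x)⁻¹ ≤ 2 := by
  calc (1 - θ * x)⁻¹ ≤ (1 / 2)⁻¹ := inv_anti₀ (by norm_num) (half_le_one_sub_mul hθ hθc hx)
    _ = 2 := by norm_num

lemma mul_inv_one_sub_mul_le (hc : 0 ≤ c) (hθ : 0 ≤ θ) (hθc : 2 * θ * c ≤ 1) (hx : x ≤ c) :
    x * (1 - θ * x)⁻¹ ≤ 2 * c := by
  have h_pos : 0 < (1 - θ * x)⁻¹ := inv_pos.2 (by linarith [half_le_one_sub_mul hθ hθc hx])
  rcases le_or_gt x 0 with h | h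
  · nlinarith
  · nlinarith [inv_one_sub_mul_le_two hθ hθc hx]

lemma mul_inv_one_sub_mul_le_of_le {θ' : ℝ} (hθ : 0 ≤ θ) (hθθ' : θ ≤ θ')
    (hx : 0 < 1 - θ' * x) : x * (1 - θ * x)⁻¹ ≤ x * (1 - θ' * x)⁻¹ := by
  have hx' : 0 < 1 - θ * x := by rcases le_or_gt x 0 with h | h <;> nlinarith
  rw [← div_eq_mul_inv, ← div_eq_mul_inv, div_le_div_iff₀ hx' hx]
  nlinarith [sq_nonneg x]

lemma mul_inv_one_sub_mul_eq (hθ : θ ≠ 0) (hx : 1 - θ * x ≠ 0) :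
    x * (1 - θ * x)⁻¹ = ((1 - θ * x)⁻¹ - 1) / θ := by
  rw [eq_div_iff hθ]
  linear_combination (-1 : ℝ) * inv_mul_cancel₀ hx

end

section

variable {ν : Measure ℝ} {c θ : ℝ}

lemma Mgen_inv_eq_mul_cauchyT {z : ℝ} (hz : z ≠ 0) : Mgen ν z⁻¹ = z * cauchyT ν z := by
  rw [Mgen, cauchyT, ← integral_const_mul]
  congr 1 with x
  rw [show 1 - z⁻¹ * x = (z - x) / z by field_simp, inv_div, div_eq_mul_inv]

lemma kT_eq_kMean_inv {z : ℝ} (hz : z ≠ 0) (hM : Mgen ν z⁻¹ ≠ 0) : kT ν z = kMean ν z⁻¹ := by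
  rw [Mgen_inv_eq_mul_cauchyT hz] at hM
  rw [kT, kMean, Mgen_inv_eq_mul_cauchyT hz]
  have hG : cauchyT ν z ≠ 0 := right_ne_zero_of_mul hM
  field_simp

lemma tendsto_kT_atTop_of_tendsto_kMean {m : EReal}
    (hk : Tendsto (fun θ => (kMean ν θ : EReal)) (𝓝[>] 0) (𝓝 m))
    (hM : Tendsto (Mgen ν) (𝓝[>] 0) (𝓝 1)) :
    Tendsto (fun z => (kT ν z : EReal)) atTop (𝓝 m) := by
  refine (hk.comp tendsto_inv_atTop_nhdsGT_zero).congr' ?_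
  filter_upwards [eventually_ne_atTop 0,
    (hM.comp tendsto_inv_atTop_nhdsGT_zero).eventually_ne one_ne_zero] with z hz hM
  rw [Function.comp_apply, kT_eq_kMean_inv hz hM]

lemma ae_eq_mul_inv_one_sub_mul (hν : ∀ᵐ x ∂ν, x ≤ c) (hθ : 0 < θ) (hθc : 2 * θ * c ≤ 1) :
    (fun x => ((1 - θ * x)⁻¹ - 1) / θ) =ᵐ[ν] fun x => x * (1 - θ * x)⁻¹ := by
  filter_upwards [hν] with x hx
  exact (mul_inv_one_sub_mul_eq hθ.ne' (by linarith [half_le_one_sub_mul hθ.le hθc hx])).symm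

variable [IsProbabilityMeasure ν]

lemma integrable_inv_one_sub_mul (hν : ∀ᵐ x ∂ν, x ≤ c) (hθ : 0 ≤ θ) (hθc : 2 * θ * c ≤ 1) :
    Integrable (fun x => (1 - θ * x)⁻¹) ν := by
  refine .of_bound (by fun_prop) 2 ?_
  filter_upwards [hν] with x hx
  rw [Real.norm_of_nonneg (inv_nonneg.2 (by linarith [half_le_one_sub_mul hθ hθc hx]))]
  exact inv_one_sub_mul_le_two hθ hθc hx

lemma integrable_mul_inv_one_sub_mul (hν : ∀ᵐ x ∂ν, x ≤ c) (hθ : 0 < θ)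
    (hθc : 2 * θ * c ≤ 1) : Integrable (fun x => x * (1 - θ * x)⁻¹) ν :=
  (((integrable_inv_one_sub_mul hν hθ.le hθc).sub (integrable_const 1)).div_const θ).congr
    (ae_eq_mul_inv_one_sub_mul hν hθ hθc)

lemma integral_mul_inv_one_sub_mul (hν : ∀ᵐ x ∂ν, x ≤ c) (hθ : 0 < θ) (hθc : 2 * θ * c ≤ 1) :
    ∫ x, x * (1 - θ * x)⁻¹ ∂ν = (Mgen ν θ - 1) / θ := by
  rw [← integral_congr_ae (ae_eq_mul_inv_one_sub_mul hν hθ hθc), integral_div,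
    integral_sub (integrable_inv_one_sub_mul hν hθ.le hθc) (integrable_const 1)]
  simp [Mgen]

lemma tendsto_Mgen_nhdsGT_zero (hν : ∀ᵐ x ∂ν, x ≤ c) : Tendsto (Mgen ν) (𝓝[>] 0) (𝓝 1) := by
  have h_small : ∀ᶠ θ in 𝓝[>] (0 : ℝ), 0 < θ ∧ 2 * θ * c < 1 :=
    eventually_mem_nhdsWithin.and (nhdsWithin_le_nhds
      ((isOpen_lt (by fun_prop) continuous_const).mem_nhds (by simp)))
  suffices Tendsto (fun θ => ∫ x, (1 - θ * x)⁻¹ ∂ν) (𝓝[>] 0) (𝓝 (∫ _, (1 : ℝ) ∂ν)) by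
    rwa [integral_const, probReal_univ, one_smul] at this
  refine tendsto_integral_filter_of_dominated_convergence (fun _ => 2)
    (Eventually.of_forall fun θ => by fun_prop) ?_ (integrable_const 2)
    (Eventually.of_forall fun x => ?_)
  · filter_upwards [h_small] with θ hθ
    filter_upwards [hν] with x hx
    rw [Real.norm_of_nonneg (inv_nonneg.2 (by linarith [half_le_one_sub_mul hθ.1.le hθ.2.le hx]))]
    exact inv_one_sub_mul_le_two hθ.1.le hθ.2.le hx
  · have : ContinuousAt (fun θ : ℝ => (1 - θ * x)⁻¹) 0 := by fun_prop (disch := simp)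
    simpa using this.tendsto.mono_left nhdsWithin_le_nhds

lemma tendsto_integral_mul_inv_one_sub_mul_nhdsGT_zero (hc : 0 < c) (hν : ∀ᵐ x ∂ν, x ≤ c) :
    Tendsto (fun θ => ((∫ x, x * (1 - θ * x)⁻¹ ∂ν : ℝ) : EReal)) (𝓝[>] 0)
      (𝓝 ((2 * c : ℝ) - ∫⁻ x, ENNReal.ofReal (2 * c - x) ∂ν)) := by
  have h_small : ∀ θ ∈ Ioo 0 (2 * c)⁻¹, 2 * θ * c ≤ 1 := fun θ hθ =>
    two_mul_mul_le_one_of_le_inv hc hθ.2.le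
  refine tendsto_integral_nhdsGT_of_monotoneOn (by positivity)
    (fun θ hθ => integrable_mul_inv_one_sub_mul hν hθ.1 (h_small θ hθ))
    (fun θ hθ => hν.mono fun x hx => mul_inv_one_sub_mul_le hc.le hθ.1.le (h_small θ hθ) hx)
    (hν.mono fun x hx θ hθ θ' hθ' hθθ' => mul_inv_one_sub_mul_le_of_le hθ.1.le hθθ'
      (by linarith [half_le_one_sub_mul hθ'.1.le (h_small θ' hθ') hx]))
    (Eventually.of_forall fun x => ?_)
  have : ContinuousAt (fun θ : ℝ => x * (1 - θ * x)⁻¹) 0 := by fun_prop (disch := simp)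
  simpa using this.tendsto.mono_left nhdsWithin_le_nhds

lemma tendsto_kMean_nhdsGT_zero (hc : 0 < c) (hν : ∀ᵐ x ∂ν, x ≤ c) :
    Tendsto (fun θ => (kMean ν θ : EReal)) (𝓝[>] 0)
      (𝓝 ((2 * c : ℝ) - ∫⁻ x, ENNReal.ofReal (2 * c - x) ∂ν)) := by
  refine (EReal.tendsto_coe_div (tendsto_integral_mul_inv_one_sub_mul_nhdsGT_zero hc hν)
    (tendsto_Mgen_nhdsGT_zero hν)).congr' ?_
  filter_upwards [Ioo_mem_nhdsGT (show (0 : ℝ) < (2 * c)⁻¹ by positivity)] with θ hθ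
  rw [integral_mul_inv_one_sub_mul hν hθ.1 (two_mul_mul_le_one_of_le_inv hc hθ.2.le), kMean,
    div_div]

end

theorem kTransform_tendsto_m0_general
    (ν : Measure ℝ) [IsProbabilityMeasure ν]
    (b : ℝ) (hb : ν (Set.Ioi b) = 0) :
    ∃ m0 : EReal, m0 < ⊤ ∧
      Tendsto (fun z : ℝ => (kT ν z : EReal)) atTop (𝓝 m0) ∧
      Tendsto (fun θ : ℝ => (kMean ν θ : EReal)) (𝓝[>] (0 : ℝ)) (𝓝 m0) ∧
      (Integrable (fun x : ℝ => x) ν → m0 = ((∫ x, x ∂ν : ℝ) : EReal)) := by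
  set c := max b 1
  have hc : 0 < c := lt_max_of_lt_right one_pos
  have hν : ∀ᵐ x ∂ν, x ≤ c := by
    rw [ae_iff]
    exact measure_mono_null (fun x hx => (le_max_left b 1).trans_lt (not_le.1 hx)) hb
  have hk := tendsto_kMean_nhdsGT_zero hc hν
  refine ⟨_, ?_, tendsto_kT_atTop_of_tendsto_kMean hk (tendsto_Mgen_nhdsGT_zero hν), hk,
    fun hint => ?_⟩
  · rw [sub_eq_add_neg]
    exact EReal.add_lt_top (EReal.coe_ne_top _)
      (EReal.neg_eq_top_iff.not.2 (EReal.coe_ennreal_ne_bot _))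
  · exact (integral_eq_sub_lintegral_ofReal_sub hint (hν.mono fun x hx => by linarith)).symm

/-- for a non-degenerate probability measure `ν` with support bounded from
above, the limit of the K-transform as `z → +∞` along the reals exists in `[-∞, +∞)`
and equals `m₀(ν) = lim_{θ→0⁺} k_ν(θ)`; when `ν` has a first moment, this limit is the
mean `∫ x dν(x)`. -/
theorem kTransform_tendsto_m0
    (ν : Measure ℝ) [IsProbabilityMeasure ν]
    (hnd : ∀ a : ℝ, ν ≠ Measure.dirac a)
    (b : ℝ) (hb : ν (Set.Ioi b) = 0) :
    ∃ m0 : EReal, m0 < ⊤ ∧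
      Tendsto (fun z : ℝ => (kT ν z : EReal)) atTop (𝓝 m0) ∧
      Tendsto (fun θ : ℝ => (kMean ν θ : EReal)) (𝓝[>] (0 : ℝ)) (𝓝 m0) ∧
      (Integrable (fun x : ℝ => x) ν → m0 = ((∫ x, x ∂ν : ℝ) : EReal)) :=
  kTransform_tendsto_m0_general ν b hb
end

section
/- Let ν be a non-degenerate probability measure on ℝ with support bounded from above and let α > 0. If ρ is a probability measure on ℝ whose K-transform satisfies K_ρ(z) = α K_ν(z) for all z in the upper half-plane ℂ⁺ (i.e. ρ = ν^{⊎α}, the boolean convolution power), then the support of ρ is bounded from above. -/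
open MeasureTheory Filter Topology Set

/-- The Cauchy transform of a measure on `ℝ`, at a complex argument:
`G_ν(z) = ∫ 1/(z-x) dν(x)`. -/
noncomputable def cauchyTC (ν : Measure ℝ) (z : ℂ) : ℂ := ∫ x, (z - (x : ℂ))⁻¹ ∂ν

/-- The K-transform (self-energy) `K_ν(z) = z - 1/G_ν(z)` at a complex argument. -/
noncomputable def kTC (ν : Measure ℝ) (z : ℂ) : ℂ := z - (cauchyTC ν z)⁻¹

/-!
With `z = x + iy`, the relation `K_ρ = α K_ν` reads `1 / G_ρ(z) = (1 - α) z + α / G_ν(z)`.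
To the right of `supp ν ⊆ (-∞, b]` the transform `G_ν(x + iy)` has real part between a positive
constant (uniform for `x` in a compact set and `y ≤ 1`) and `1 / (x - b)`, and imaginary part
`O(y)`. Hence for `x ≥ max (b + 1) (α b + 2)` and small `y` the right-hand side has real part at
least `x - α b - O(y²) ≥ 1` and imaginary part `O(y)`, so `-Im G_ρ(x + iy) = O(y)`. As
`ρ (x - y, x + y) ≤ 2y · (-Im G_ρ(x + iy))`, intervals of length `2y` there carry mass `O(y²)`;
covering `[c, R]` by `O(1 / y)` of them and letting `y → 0` gives `ρ [c, R] = 0`.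
-/

open Complex

namespace Complex

theorem abs_inv_im_le {w : ℂ} {κ : ℝ} (hκ : 0 < κ) (hw : κ ≤ w.re) :
    |(w⁻¹).im| ≤ |w.im| / κ ^ 2 := by
  have hsq : κ ^ 2 ≤ normSq w := by
    rw [normSq_apply]; nlinarith [mul_self_nonneg w.im]
  rw [inv_im, neg_div, abs_neg, abs_div, abs_of_nonneg (normSq_nonneg w)]
  exact div_le_div_of_nonneg_left (abs_nonneg _) (by positivity) hsq

theorem inv_re_sub_le_inv_re {w : ℂ} (hw : 0 < w.re) :
    (w.re)⁻¹ - w.im ^ 2 / w.re ^ 3 ≤ (w⁻¹).re := by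
  have hgap : (w⁻¹).re - ((w.re)⁻¹ - w.im ^ 2 / w.re ^ 3)
      = w.im ^ 4 / (w.re ^ 3 * (w.re ^ 2 + w.im ^ 2)) := by
    rw [inv_re, normSq_apply]
    field_simp
    ring
  have : 0 ≤ w.im ^ 4 / (w.re ^ 3 * (w.re ^ 2 + w.im ^ 2)) := by positivity
  linarith

end Complex

theorem re_inv_sub_ofReal_add_mul_I (x y t : ℝ) :
    (((x : ℂ) + y * I - t)⁻¹).re = (x - t) / ((x - t) ^ 2 + y ^ 2) := by
  simp [inv_re, normSq_apply, pow_two]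

theorem im_inv_sub_ofReal_add_mul_I (x y t : ℝ) :
    (((x : ℂ) + y * I - t)⁻¹).im = -(y / ((x - t) ^ 2 + y ^ 2)) := by
  simp [inv_im, normSq_apply, pow_two, neg_div]

theorem norm_inv_sub_ofReal_le {z : ℂ} (hz : 0 < z.im) (t : ℝ) :
    ‖(z - t)⁻¹‖ ≤ (z.im)⁻¹ := by
  rw [norm_inv]
  refine inv_anti₀ hz ?_
  simpa [abs_of_pos hz] using abs_im_le_norm (z - t)

theorem integrable_inv_sub_ofReal (μ : Measure ℝ) [IsFiniteMeasure μ] {z : ℂ} (hz : 0 < z.im) :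
    Integrable (fun t : ℝ => (z - t)⁻¹) μ := by
  have hne : ∀ t : ℝ, z - t ≠ 0 := fun t h => by
    simpa [hz.ne'] using congrArg im h
  refine (integrable_const (z.im)⁻¹).mono' ?_ (ae_of_all _ (norm_inv_sub_ofReal_le hz))
  exact ((continuous_const.sub continuous_ofReal).inv₀ hne).aestronglyMeasurable

section CauchyTransform

variable (μ : Measure ℝ) [IsFiniteMeasure μ] (x : ℝ) {y : ℝ}

theorem re_cauchyTC (hy : 0 < y) :
    (cauchyTC μ (x + y * I)).re = ∫ t, (x - t) / ((x - t) ^ 2 + y ^ 2) ∂μ := by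
  have hi := integrable_inv_sub_ofReal μ (z := x + y * I) (by simpa using hy)
  simp_rw [cauchyTC, ← RCLike.re_to_complex, ← integral_re hi, RCLike.re_to_complex,
    re_inv_sub_ofReal_add_mul_I]

theorem neg_im_cauchyTC (hy : 0 < y) :
    -(cauchyTC μ (x + y * I)).im = ∫ t, y / ((x - t) ^ 2 + y ^ 2) ∂μ := by
  have hi := integrable_inv_sub_ofReal μ (z := x + y * I) (by simpa using hy)
  simp_rw [cauchyTC, ← RCLike.im_to_complex, ← integral_im hi, ← integral_neg,
    RCLike.im_to_complex, im_inv_sub_ofReal_add_mul_I, neg_neg]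

theorem integrable_poissonKernel (hy : 0 < y) :
    Integrable (fun t : ℝ => y / ((x - t) ^ 2 + y ^ 2)) μ := by
  have hi := integrable_inv_sub_ofReal μ (z := x + y * I) (by simpa using hy)
  refine hi.im.neg.congr (ae_of_all _ fun t => ?_)
  simp only [Pi.neg_apply, RCLike.im_to_complex, im_inv_sub_ofReal_add_mul_I, neg_neg]

theorem integrable_conjPoissonKernel (hy : 0 < y) :
    Integrable (fun t : ℝ => (x - t) / ((x - t) ^ 2 + y ^ 2)) μ := by
  have hi := integrable_inv_sub_ofReal μ (z := x + y * I) (by simpa using hy)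
  refine hi.re.congr (ae_of_all _ fun t => ?_)
  simp only [RCLike.re_to_complex, re_inv_sub_ofReal_add_mul_I]

theorem measureReal_Ioo_le_neg_im_cauchyTC (hy : 0 < y) :
    μ.real (Ioo (x - y) (x + y)) ≤ 2 * y * -(cauchyTC μ (x + y * I)).im := by
  have hind : ∀ t, (Ioo (x - y) (x + y)).indicator (fun _ => (2 * y)⁻¹) t
      ≤ y / ((x - t) ^ 2 + y ^ 2) := by
    intro t
    by_cases ht : t ∈ Ioo (x - y) (x + y)
    · rw [indicator_of_mem ht, le_div_iff₀ (by positivity), inv_mul_le_iff₀ (by positivity)]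
      nlinarith [ht.1, ht.2]
    · rw [indicator_of_notMem ht]; positivity
  have hint := integral_mono ((integrable_const _).indicator measurableSet_Ioo)
    (integrable_poissonKernel μ x hy) hind
  rw [integral_indicator_const _ measurableSet_Ioo, smul_eq_mul, ← neg_im_cauchyTC μ x hy]
    at hint
  rwa [← div_eq_mul_inv, div_le_iff₀' (by positivity)] at hint

end CauchyTransform

section SupportBoundedAbove

theorem ae_le_of_measure_Ioi_eq_zero {μ : Measure ℝ} {b : ℝ} (hb : μ (Ioi b) = 0) :
    ∀ᵐ t ∂μ, t ≤ b :=
  (measure_eq_zero_iff_ae_notMem.1 hb).mono fun _ ht => not_lt.1 ht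

variable {ν : Measure ℝ} [IsProbabilityMeasure ν] {b : ℝ}

theorem re_cauchyTC_le_inv (hb : ν (Ioi b) = 0) {x y : ℝ} (hx : b < x) (hy : 0 < y) :
    (cauchyTC ν (x + y * I)).re ≤ (x - b)⁻¹ := by
  rw [re_cauchyTC ν x hy]
  refine (integral_mono_ae (integrable_conjPoissonKernel ν x hy)
    (integrable_const (x - b)⁻¹) ?_).trans_eq (by simp)
  filter_upwards [ae_le_of_measure_Ioi_eq_zero hb] with t ht
  calc (x - t) / ((x - t) ^ 2 + y ^ 2) ≤ (x - t) / (x - t) ^ 2 :=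
        div_le_div_of_nonneg_left (by linarith) (pow_pos (by linarith) 2)
          (le_add_of_nonneg_right (sq_nonneg y))
    _ = (x - t)⁻¹ := by field_simp
    _ ≤ (x - b)⁻¹ := inv_anti₀ (by linarith) (by linarith)

theorem abs_im_cauchyTC_le (hb : ν (Ioi b) = 0) {x y : ℝ} (hx : b < x) (hy : 0 < y) :
    |(cauchyTC ν (x + y * I)).im| ≤ y / (x - b) ^ 2 := by
  have hnonneg : 0 ≤ -(cauchyTC ν (x + y * I)).im := by
    rw [neg_im_cauchyTC ν x hy]
    exact integral_nonneg fun t => by positivity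
  rw [abs_of_nonpos (neg_nonneg.1 hnonneg), neg_im_cauchyTC ν x hy]
  refine (integral_mono_ae (integrable_poissonKernel ν x hy)
    (integrable_const (y / (x - b) ^ 2)) ?_).trans_eq (by simp)
  filter_upwards [ae_le_of_measure_Ioi_eq_zero hb] with t ht
  exact div_le_div_of_nonneg_left hy.le (by positivity) (by nlinarith)

/-- The integrand is bounded below by its value at `x = R`, `y = 1`: for `y ≤ 1` it is at least
`s / (s ^ 2 + 1)` with `s = x - t`, which decreases on `[1, ∞)`. -/
theorem exists_pos_le_re_cauchyTC (hb : ν (Ioi b) = 0) (R : ℝ) :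
    ∃ κ > 0, ∀ x ∈ Icc (b + 1) R, ∀ y ∈ Ioc (0 : ℝ) 1, κ ≤ (cauchyTC ν (x + y * I)).re := by
  obtain hR | hR := le_or_gt R b
  · exact ⟨1, one_pos, fun x hx => by linarith [hx.1, hx.2]⟩
  have hae := ae_le_of_measure_Ioi_eq_zero hb
  set g : ℝ → ℝ := fun t => (R - t) / ((R - t) ^ 2 + 1)
  have hg : Integrable g ν := by simpa using integrable_conjPoissonKernel ν R one_pos
  have hgpos : 0 < ∫ t, g t ∂ν := by
    rw [integral_pos_iff_support_of_nonneg_ae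
      (hae.mono fun t ht => div_nonneg (by linarith) (by positivity)) hg]
    have hsupp : Iic b ⊆ Function.support g := fun t ht =>
      (div_pos (by linarith [mem_Iic.1 ht]) (by positivity)).ne'
    refine lt_of_lt_of_le ?_ (measure_mono hsupp)
    rw [← compl_Ioi, prob_compl_eq_one_sub measurableSet_Ioi, hb]
    simp
  refine ⟨_, hgpos, fun x hx y hy => ?_⟩
  rw [re_cauchyTC ν x hy.1]
  refine integral_mono_ae hg (integrable_conjPoissonKernel ν x hy.1) ?_
  filter_upwards [hae] with t ht
  have hs : 1 ≤ x - t := by linarith [hx.1]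
  have hS : x - t ≤ R - t := by linarith [hx.2]
  calc g t ≤ (x - t) / ((x - t) ^ 2 + 1) := by
        simp only [g]
        rw [div_le_div_iff₀ (by positivity) (by positivity)]
        nlinarith [mul_nonneg (sub_nonneg.2 hS) (sub_nonneg.2 (one_le_mul_of_one_le_of_one_le
          hs (hs.trans hS)))]
    _ ≤ (x - t) / ((x - t) ^ 2 + y ^ 2) :=
        div_le_div_of_nonneg_left (by linarith) (by positivity) (by nlinarith [hy.1, hy.2])

end SupportBoundedAbove

theorem Icc_subset_biUnion_Ioo (c R : ℝ) {y : ℝ} (hy : 0 < y) :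
    Icc c R ⊆ ⋃ k ∈ Finset.range (⌊(R - c) / y⌋₊ + 1), Ioo (c + k * y - y) (c + k * y + y) := by
  intro s hs
  have hk : (⌊(s - c) / y⌋₊ : ℝ) * y ≤ s - c :=
    (le_div_iff₀ hy).1 (Nat.floor_le (div_nonneg (by linarith [hs.1]) hy.le))
  have hk' : s - c < (⌊(s - c) / y⌋₊ + 1) * y := (div_lt_iff₀ hy).1 (Nat.lt_floor_add_one _)
  simp only [mem_iUnion, Finset.mem_range, mem_Ioo]
  refine ⟨⌊(s - c) / y⌋₊, Nat.lt_succ_of_le (Nat.floor_le_floor (by gcongr; exact hs.2)), ?_, ?_⟩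
  · linarith
  · linarith

theorem measure_Icc_eq_zero_of_measureReal_Ioo_le_sq {μ : Measure ℝ} [IsFiniteMeasure μ]
    {c R C y₀ : ℝ} (hy₀ : 0 < y₀)
    (h : ∀ x ∈ Icc c R, ∀ y ∈ Ioc 0 y₀, μ.real (Ioo (x - y) (x + y)) ≤ C * y ^ 2) :
    μ (Icc c R) = 0 := by
  obtain hRc | hcR := lt_or_ge R c
  · rw [Icc_eq_empty_of_lt hRc, measure_empty]
  have hC : 0 ≤ C := nonneg_of_mul_nonneg_left
    (measureReal_nonneg.trans (h c ⟨le_rfl, hcR⟩ y₀ ⟨hy₀, le_rfl⟩)) (by positivity)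
  have hbound : ∀ y ∈ Ioc 0 y₀, μ.real (Icc c R) ≤ C * (R - c) * y + C * y ^ 2 := by
    intro y hy
    set n := ⌊(R - c) / y⌋₊
    have hn : (n : ℝ) ≤ (R - c) / y := Nat.floor_le (div_nonneg (by linarith) hy.1.le)
    have hball : ∀ k ∈ Finset.range (n + 1),
        μ.real (Ioo (c + k * y - y) (c + k * y + y)) ≤ C * y ^ 2 := by
      intro k hk
      have hkn : (k : ℝ) ≤ n := by exact_mod_cast Nat.lt_succ_iff.1 (Finset.mem_range.1 hk)
      have hky : (k : ℝ) * y ≤ R - c := by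
        calc (k : ℝ) * y ≤ (R - c) / y * y := mul_le_mul_of_nonneg_right (hkn.trans hn) hy.1.le
          _ = R - c := div_mul_cancel₀ _ hy.1.ne'
      exact h _ ⟨by nlinarith [hy.1], by linarith⟩ y hy
    calc μ.real (Icc c R)
        ≤ ∑ k ∈ Finset.range (n + 1), μ.real (Ioo (c + k * y - y) (c + k * y + y)) :=
          (measureReal_mono (Icc_subset_biUnion_Ioo c R hy.1) (measure_ne_top _ _)).trans
            (measureReal_biUnion_finset_le _ _)
      _ ≤ (n + 1) * (C * y ^ 2) := by simpa using Finset.sum_le_card_nsmul _ _ _ hball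
      _ ≤ ((R - c) / y + 1) * (C * y ^ 2) := by gcongr
      _ = C * (R - c) * y + C * y ^ 2 := by field_simp [hy.1.ne']
  have hlim : Tendsto (fun y => C * (R - c) * y + C * y ^ 2) (𝓝[>] 0) (𝓝 0) := by
    refine (Continuous.tendsto' ?_ 0 0 (by simp)).mono_left nhdsWithin_le_nhds
    fun_prop
  have hle : μ.real (Icc c R) ≤ 0 :=
    ge_of_tendsto hlim (eventually_of_mem (Ioc_mem_nhdsGT hy₀) hbound)
  exact (measureReal_eq_zero_iff (measure_ne_top _ _)).1 (hle.antisymm measureReal_nonneg)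

theorem inv_cauchyTC_eq_of_kTC_eq {ν ρ : Measure ℝ} {α : ℝ} {z : ℂ}
    (hK : kTC ρ z = (α : ℂ) * kTC ν z) :
    (cauchyTC ρ z)⁻¹ = (1 - α) * z + α * (cauchyTC ν z)⁻¹ := by
  rw [kTC, kTC] at hK
  linear_combination -hK

theorem measureReal_Ioo_le_sq_of_kTC_eq {ν ρ : Measure ℝ} [IsProbabilityMeasure ν]
    [IsFiniteMeasure ρ] {b α κ x y : ℝ} (hb : ν (Ioi b) = 0) (hα : 0 < α)
    (hK : kTC ρ (x + y * I) = (α : ℂ) * kTC ν (x + y * I)) (hκ : 0 < κ)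
    (hx₁ : b + 1 ≤ x) (hx₂ : α * b + 2 ≤ x) (hy : 0 < y) (hyκ : α * y ^ 2 ≤ κ ^ 3)
    (hre : κ ≤ (cauchyTC ν (x + y * I)).re) :
    ρ.real (Ioo (x - y) (x + y)) ≤ 2 * (|1 - α| + α / κ ^ 2) * y ^ 2 := by
  set G := cauchyTC ν (x + y * I)
  set w : ℂ := (1 - α) * (x + y * I) + α * G⁻¹
  have hGρ : cauchyTC ρ (x + y * I) = w⁻¹ := by
    rw [← inv_inv (cauchyTC ρ _), inv_cauchyTC_eq_of_kTC_eq hK]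
  have hGim : |G.im| ≤ y := (abs_im_cauchyTC_le hb (by linarith) hy).trans
    (div_le_self hy.le (one_le_pow₀ (by linarith)))
  have hGinv_re : x - b - y ^ 2 / κ ^ 3 ≤ (G⁻¹).re := by
    have hGre : x - b ≤ G.re⁻¹ :=
      (le_inv_comm₀ (by linarith) (hκ.trans_le hre)).2 (re_cauchyTC_le_inv hb (by linarith) hy)
    have hGim_sq : G.im ^ 2 / G.re ^ 3 ≤ y ^ 2 / κ ^ 3 :=
      div_le_div₀ (sq_nonneg y) (sq_le_sq.2 (hGim.trans (le_abs_self y)))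
        (by positivity) (pow_le_pow_left₀ hκ.le hre 3)
    linarith [Complex.inv_re_sub_le_inv_re (hκ.trans_le hre)]
  have hw_re : 1 ≤ w.re := by
    have hsmall : α * (y ^ 2 / κ ^ 3) ≤ 1 := by
      rw [← mul_div_assoc, div_le_one (by positivity)]; exact hyκ
    have : w.re = (1 - α) * x + α * (G⁻¹).re := by simp [w]
    nlinarith
  have hw_im : |w.im| ≤ (|1 - α| + α / κ ^ 2) * y := by
    have : w.im = (1 - α) * y + α * (G⁻¹).im := by simp [w]
    have hGinv_im : |(G⁻¹).im| ≤ y / κ ^ 2 :=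
      (Complex.abs_inv_im_le hκ hre).trans (by gcongr)
    calc |w.im| ≤ |1 - α| * y + α * |(G⁻¹).im| := by
          rw [this]
          refine (abs_add_le _ _).trans_eq ?_
          rw [abs_mul, abs_mul, abs_of_pos hy, abs_of_pos hα]
      _ ≤ |1 - α| * y + α * (y / κ ^ 2) := by gcongr
      _ = (|1 - α| + α / κ ^ 2) * y := by ring
  calc ρ.real (Ioo (x - y) (x + y)) ≤ 2 * y * -(w⁻¹).im :=
        hGρ ▸ measureReal_Ioo_le_neg_im_cauchyTC ρ x hy
    _ ≤ 2 * y * (|w.im| / 1 ^ 2) := by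
        gcongr
        exact (neg_le_abs _).trans (Complex.abs_inv_im_le one_pos hw_re)
    _ ≤ 2 * y * ((|1 - α| + α / κ ^ 2) * y) := by rw [one_pow, div_one]; gcongr
    _ = 2 * (|1 - α| + α / κ ^ 2) * y ^ 2 := by ring

theorem boolean_power_support_bddAbove_general
    (ν ρ : Measure ℝ) [IsProbabilityMeasure ν] [IsProbabilityMeasure ρ]
    (b : ℝ) (hb : ν (Set.Ioi b) = 0)
    (α : ℝ) (hα : 0 < α)
    (hK : ∀ z : ℂ, 0 < z.im → kTC ρ z = (α : ℂ) * kTC ν z) :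
    ∃ c : ℝ, ρ (Set.Ioi c) = 0 := by
  set c := max (b + 1) (α * b + 2)
  have hIcc : ∀ R, ρ (Icc c R) = 0 := by
    intro R
    obtain ⟨κ, hκ, hre⟩ := exists_pos_le_re_cauchyTC hb R
    refine measure_Icc_eq_zero_of_measureReal_Ioo_le_sq (C := 2 * (|1 - α| + α / κ ^ 2))
      (y₀ := min 1 (κ ^ 3 / α)) (by positivity) fun x hx y hy => ?_
    have hy₁ : y ≤ 1 := hy.2.trans (min_le_left _ _)
    have hyκ : α * y ^ 2 ≤ κ ^ 3 := by
      have : α * y ≤ κ ^ 3 := (le_div_iff₀' hα).1 (hy.2.trans (min_le_right _ _))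
      nlinarith [mul_le_mul_of_nonneg_left hy₁ (mul_nonneg hα.le hy.1.le)]
    exact measureReal_Ioo_le_sq_of_kTC_eq hb hα (hK _ (by simpa using hy.1)) hκ
      (le_of_max_le_left hx.1) (le_of_max_le_right hx.1) hy.1 hyκ
      (hre x ⟨(le_max_left _ _).trans hx.1, hx.2⟩ y ⟨hy.1, hy₁⟩)
  refine ⟨c, measure_mono_null (fun s hs => ?_) (measure_iUnion_null fun n : ℕ => hIcc n)⟩
  exact mem_iUnion.2 ⟨⌈s⌉₊, le_of_lt hs, Nat.le_ceil s⟩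

/-- if `ν` is a non-degenerate probability measure with support bounded
from above, `α > 0`, and `ρ` is a probability measure whose K-transform satisfies
`K_ρ = α K_ν` on the upper half-plane (i.e. `ρ = ν^{⊎α}` is the boolean convolution
power), then the support of `ρ` is bounded from above. -/
theorem boolean_power_support_bddAbove
    (ν ρ : Measure ℝ) [IsProbabilityMeasure ν] [IsProbabilityMeasure ρ]
    (hnd : ∀ a : ℝ, ν ≠ Measure.dirac a)
    (b : ℝ) (hb : ν (Set.Ioi b) = 0)
    (α : ℝ) (hα : 0 < α)
    (hK : ∀ z : ℂ, 0 < z.im → kTC ρ z = (α : ℂ) * kTC ν z) :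
    ∃ c : ℝ, ρ (Set.Ioi c) = 0 :=
  boolean_power_support_bddAbove_general ν ρ b hb α hα hK
end
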